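/- If H is a weighted emulator of G (d_H(u,v) ≥ d_G(u,v) for all pairs) containing: (i) a shortest subpath from u to x_i in G, (ii) a shortest subpath from x_j to v in G, (iii) edges {x_i,a}, {x_j,b} of weight at most W_{u,v} each, and (iv) an edge {a,b} of weight d_G(a,b), where x_i, x_j lie on the shortest u-v path P with x_i closer to u, then d_H(u,v) ≤ d_G(u,v) + 4·W_{u,v}. -/
import Mathlib


open Finset SimpleGraph
open scoped Classical

namespace AddSpanner

/-- Total weight of a walk. -/
noncomputable def walkWeight {V : Type} (w : V → V → ℝ) {G : SimpleGraph V} :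
    ∀ {u v : V}, G.Walk u v → ℝ
  | _, _, .nil => 0
  | u, _, .cons (v := x) _ q => w u x + walkWeight w q

/-- Maximum edge weight along a walk (0 for the trivial walk). -/
noncomputable def walkMaxW {V : Type} (w : V → V → ℝ) {G : SimpleGraph V} {u v : V}
    (p : G.Walk u v) : ℝ :=
  (p.darts.map fun d => w d.toProd.1 d.toProd.2).foldr max 0

/-- Weighted shortest-path distance (infimum over all walk weights). -/
noncomputable def wdist {V : Type} (G : SimpleGraph V) (w : V → V → ℝ) (u v : V) : ℝ :=
  sInf {x | ∃ p : G.Walk u v, walkWeight w p = x}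

/-- A walk is a shortest path if it is a path whose weight realizes the distance. -/
def IsShortestPath {V : Type} (G : SimpleGraph V) (w : V → V → ℝ) {u v : V}
    (p : G.Walk u v) : Prop :=
  p.IsPath ∧ walkWeight w p = wdist G w u v

/-- Number of `H`-neighbors of `x` reachable by an edge no heavier than the edge `{x,y}`. -/
noncomputable def lightDeg {V : Type} [Fintype V] (H : SimpleGraph V) (w : V → V → ℝ)
    (x y : V) : ℕ :=
  (Finset.univ.filter fun z => H.Adj x z ∧ w x z ≤ w x y).card

/-- `H` is a `t`-light initialization of `G`: it is a subgraph which, for every vertex,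
contains its `t` lightest incident edges (all of them if the degree is at most `t`);
equivalently, whenever an edge `{x,y}` of `G` is missing from `H`, vertex `x` already has at
least `t` incident `H`-edges of weight at most `w x y`. -/
def LightInit {V : Type} [Fintype V] (G H : SimpleGraph V) (w : V → V → ℝ) (t : ℝ) : Prop :=
  H ≤ G ∧ ∀ x y, G.Adj x y → ¬ H.Adj x y → t ≤ (lightDeg H w x y : ℝ)

/-- Number of edges of a graph. -/
noncomputable def numEdges {V : Type} (H : SimpleGraph V) : ℕ :=
  Nat.card H.edgeSet

end AddSpanner

namespace AddSpanner

variable {V : Type} {G : SimpleGraph V} {w : V → V → ℝ}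

@[simp] lemma walkWeight_nil {u : V} : walkWeight w (Walk.nil : G.Walk u u) = 0 := rfl

lemma walkWeight_cons {u x v : V} (h : G.Adj u x) (q : G.Walk x v) :
    walkWeight w (Walk.cons h q) = w u x + walkWeight w q := rfl

lemma walkWeight_append {u x v : V} (p : G.Walk u x) (q : G.Walk x v) :
    walkWeight w (p.append q) = walkWeight w p + walkWeight w q := by
  induction p with
  | nil => simp
  | cons h p ih => simp [Walk.cons_append, walkWeight_cons, ih]; ring

lemma walkWeight_nonneg (hw : ∀ x y, G.Adj x y → 0 ≤ w x y) {u v : V} (p : G.Walk u v) :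
    0 ≤ walkWeight w p := by
  induction p with
  | nil => exact le_refl 0
  | cons h p ih => exact add_nonneg (hw _ _ h) ih

lemma walkWeight_reverse (hs : ∀ x y, w x y = w y x) {u v : V} (p : G.Walk u v) :
    walkWeight w p.reverse = walkWeight w p := by
  induction p with
  | nil => rfl
  | cons h p ih =>
    rw [Walk.reverse_cons, walkWeight_append, ih, walkWeight_cons, walkWeight_cons,
      walkWeight_nil, hs]
    ring

lemma wdist_bddBelow (hw : ∀ x y, G.Adj x y → 0 ≤ w x y) (u v : V) :
    BddBelow {x | ∃ p : G.Walk u v, walkWeight w p = x} :=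
  ⟨0, fun _ ⟨p, hp⟩ => hp ▸ walkWeight_nonneg hw p⟩

lemma wdist_le_walkWeight (hw : ∀ x y, G.Adj x y → 0 ≤ w x y) {u v : V} (p : G.Walk u v) :
    wdist G w u v ≤ walkWeight w p :=
  csInf_le (wdist_bddBelow hw u v) ⟨p, rfl⟩

lemma wdist_nonneg (hw : ∀ x y, G.Adj x y → 0 ≤ w x y) (u v : V) :
    0 ≤ wdist G w u v :=
  Real.sInf_nonneg (fun _ ⟨p, hp⟩ => hp ▸ walkWeight_nonneg hw p)

lemma wdist_symm (hs : ∀ x y, w x y = w y x) (u v : V) :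
    wdist G w u v = wdist G w v u := by
  unfold wdist
  congr 1
  ext x
  constructor
  · rintro ⟨p, rfl⟩; exact ⟨p.reverse, walkWeight_reverse hs p⟩
  · rintro ⟨p, rfl⟩; exact ⟨p.reverse, walkWeight_reverse hs p⟩

lemma le_wdist {u v : V} {c : ℝ} (p0 : G.Walk u v)
    (h : ∀ p : G.Walk u v, c ≤ walkWeight w p) : c ≤ wdist G w u v :=
  le_csInf ⟨_, p0, rfl⟩ fun _ ⟨p, hp⟩ => hp ▸ h p

lemma wdist_triangle (hw : ∀ x y, G.Adj x y → 0 ≤ w x y) {u x v : V}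
    (h1 : Nonempty (G.Walk u x)) (h2 : Nonempty (G.Walk x v)) :
    wdist G w u v ≤ wdist G w u x + wdist G w x v := by
  obtain ⟨p0⟩ := h1
  obtain ⟨q0⟩ := h2
  have key : ∀ (p : G.Walk u x) (q : G.Walk x v),
      wdist G w u v ≤ walkWeight w p + walkWeight w q := fun p q =>
    (wdist_le_walkWeight hw (p.append q)).trans_eq (walkWeight_append p q)
  have h : wdist G w u v - wdist G w x v ≤ wdist G w u x := by
    apply le_wdist p0
    intro p
    have : wdist G w u v - walkWeight w p ≤ wdist G w x v := by
      apply le_wdist q0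
      intro q
      linarith [key p q]
    linarith
  linarith

lemma wdist_pos [Fintype V] (hw : ∀ x y, G.Adj x y → 0 < w x y) {u v : V}
    (hne : u ≠ v) (p0 : G.Walk u v) : 0 < wdist G w u v := by
  classical
  set s : Finset (V × V) := Finset.univ.filter (fun pr => G.Adj pr.1 pr.2) with hs
  have hsne : s.Nonempty := by
    cases p0 with
    | nil => exact absurd rfl hne
    | cons h q => exact ⟨(u, _), by simpa [hs] using h⟩
  set ε : ℝ := s.inf' hsne (fun pr => w pr.1 pr.2) with hε
  have hεpos : 0 < ε := by
    rw [hε, Finset.lt_inf'_iff]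
    rintro ⟨x, y⟩ hxy
    exact hw x y (by simpa [hs] using hxy)
  have hbound : ∀ q : G.Walk u v, ε ≤ walkWeight w q := by
    intro q
    cases q with
    | nil => exact absurd rfl hne
    | cons h r =>
      rw [walkWeight_cons]
      have h1 : ε ≤ w _ _ := Finset.inf'_le _ (show (u, _) ∈ s by simpa [hs] using h)
      have h2 : 0 ≤ walkWeight w r := walkWeight_nonneg (fun x y hxy => (hw x y hxy).le) r
      linarith
  calc 0 < ε := hεpos
    _ ≤ wdist G w u v := le_wdist p0 hbound

lemma walkMaxW_nonneg {u v : V} (p : G.Walk u v) : 0 ≤ walkMaxW w p := by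
  have : ∀ l : List ℝ, (0 : ℝ) ≤ l.foldr max 0 := by
    intro l
    induction l with
    | nil => exact le_refl 0
    | cons a l ih => exact le_max_of_le_right ih
  exact this _

end AddSpanner

open AddSpanner in
/-- if the emulator `H` dominates the distances of `G` and contains shortest
subpaths `u → xᵢ` and `x_j → v` of the shortest path `P`, edges `{xᵢ,a}`, `{x_j,b}` of weight at
most `W_{u,v}`, and an edge `{a,b}` of weight `d_G(a,b)`, then
`d_H(u,v) ≤ d_G(u,v) + 4·W_{u,v}`. -/
theorem emulator_stretch_via_bridge
    (V : Type) [Fintype V] [DecidableEq V]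
    (G : SimpleGraph V) (w : V → V → ℝ)
    (hw : ∀ x y, G.Adj x y → 0 < w x y) (hsymm : ∀ x y, w x y = w y x)
    (u v : V) (p : G.Walk u v) (hp : IsShortestPath G w p)
    (xi xj : V) (hxi : xi ∈ p.support) (hxj : xj ∈ p.support)
    (horder : wdist G w u xi ≤ wdist G w u xj)
    (a b : V)
    (H : SimpleGraph V) (wH : V → V → ℝ)
    (hwHsymm : ∀ x y, wH x y = wH y x) (hwHpos : ∀ x y, H.Adj x y → 0 ≤ wH x y)
    -- `H` dominates the distances of `G`:
    (hdom : ∀ x y : V, wdist G w x y ≤ wdist H wH x y)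
    -- (i), (ii): `H` contains shortest subpaths `u → xᵢ` and `x_j → v`:
    (hsub₁ : wdist H wH u xi ≤ wdist G w u xi)
    (hsub₂ : wdist H wH xj v ≤ wdist G w xj v)
    -- (iii): edges `{xᵢ,a}`, `{x_j,b}` of weight at most `W_{u,v}`:
    (hia : H.Adj xi a) (hwia : wH xi a ≤ walkMaxW w p)
    (hjb : H.Adj xj b) (hwjb : wH xj b ≤ walkMaxW w p)
    -- (iv): an edge `{a,b}` of weight `d_G(a,b)`:
    (hab : H.Adj a b) (hwab : wH a b = wdist G w a b)
    -- `w(xᵢ,a) ≤ W` and `w(x_j,b) ≤ W` in `G`: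
    (hGa : G.Adj xi a) (hGwa : w xi a ≤ walkMaxW w p)
    (hGb : G.Adj xj b) (hGwb : w xj b ≤ walkMaxW w p) :
    wdist H wH u v ≤ wdist G w u v + 4 * walkMaxW w p := by
  classical
  have hwnn : ∀ x y, G.Adj x y → 0 ≤ w x y := fun x y h => (hw x y h).le
  set W := walkMaxW w p with hWdef
  have hW0 : 0 ≤ W := walkMaxW_nonneg p
  -- G-side walks
  set q : G.Walk u xi := p.takeUntil xi hxi with hq
  set r : G.Walk xi v := p.dropUntil xi hxi with hr
  have hqr : q.append r = p := p.take_spec hxi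
  have htotal : walkWeight w q + walkWeight w r = wdist G w u v := by
    rw [← walkWeight_append, hqr, hp.2]
  have wxixj : G.Walk xi xj := q.reverse.append (p.takeUntil xj hxj)
  -- key split inequality
  have hsplit : wdist G w u xi + wdist G w xi xj + wdist G w xj v ≤ wdist G w u v := by
    by_cases hcase : xj ∈ r.support
    · set r1 : G.Walk xi xj := r.takeUntil xj hcase with hr1
      set r2 : G.Walk xj v := r.dropUntil xj hcase with hr2
      have hrr : r1.append r2 = r := r.take_spec hcase
      have htot2 : walkWeight w r1 + walkWeight w r2 = walkWeight w r := by
        rw [← walkWeight_append, hrr]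
      have h1 := wdist_le_walkWeight hwnn q
      have h2 := wdist_le_walkWeight hwnn r1
      have h3 := wdist_le_walkWeight hwnn r2
      linarith
    · have hxjq : xj ∈ q.support := by
        have hmem : xj ∈ (q.append r).support := by rw [hqr]; exact hxj
        rcases (Walk.mem_support_append_iff q r).mp hmem with h | h
        · exact h
        · exact absurd h hcase
      set q1 : G.Walk u xj := q.takeUntil xj hxjq with hq1
      set q2 : G.Walk xj xi := q.dropUntil xj hxjq with hq2
      have hqq : q1.append q2 = q := q.take_spec hxjq
      have htot2 : walkWeight w q1 + walkWeight w q2 = walkWeight w q := by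
        rw [← walkWeight_append, hqq]
      have h1 := wdist_le_walkWeight hwnn q1
      have h2 := wdist_le_walkWeight hwnn q2
      have h3 := wdist_le_walkWeight hwnn r
      -- subpath of shortest path is shortest: weight q ≤ d(u,xi)
      have tri0 : wdist G w u v ≤ wdist G w u xi + wdist G w xi v :=
        wdist_triangle hwnn ⟨q⟩ ⟨r⟩
      have hq_le : walkWeight w q ≤ wdist G w u xi := by linarith
      have hji0 : wdist G w xj xi ≤ 0 := by linarith
      have hji : wdist G w xj xi = 0 := le_antisymm hji0 (wdist_nonneg hwnn _ _)
      have hij : wdist G w xi xj = 0 := by rw [wdist_symm hsymm]; exact hji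
      have tri1 : wdist G w u xi ≤ wdist G w u xj + wdist G w xj xi :=
        wdist_triangle hwnn ⟨q1⟩ ⟨q2⟩
      have tri2 : wdist G w xj v ≤ wdist G w xj xi + wdist G w xi v :=
        wdist_triangle hwnn ⟨q2⟩ ⟨r⟩
      have h4 := wdist_le_walkWeight hwnn q
      linarith
  -- bridge bound in G
  have e_axi : G.Walk a xi := Walk.cons hGa.symm Walk.nil
  have e_xjb : G.Walk xj b := Walk.cons hGb Walk.nil
  have hdaxi : wdist G w a xi ≤ W := by
    have := wdist_le_walkWeight hwnn (Walk.cons hGa.symm Walk.nil)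
    rw [walkWeight_cons, walkWeight_nil] at this
    rw [hsymm a xi] at this
    linarith
  have hdxjb : wdist G w xj b ≤ W := by
    have := wdist_le_walkWeight hwnn (Walk.cons hGb Walk.nil)
    rw [walkWeight_cons, walkWeight_nil] at this
    linarith
  have hab_bound : wdist G w a b ≤ 2 * W + wdist G w xi xj := by
    have tri1 : wdist G w a b ≤ wdist G w a xi + wdist G w xi b :=
      wdist_triangle hwnn ⟨e_axi⟩ ⟨wxixj.append e_xjb⟩
    have tri2 : wdist G w xi b ≤ wdist G w xi xj + wdist G w xj b :=
      wdist_triangle hwnn ⟨wxixj⟩ ⟨e_xjb⟩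
    linarith
  -- existence of H-walks u→xi and xj→v
  have hwHnn := hwHpos
  have hHwalk : ∀ (x y : V), G.Walk x y → wdist H wH x y ≤ wdist G w x y →
      Nonempty (H.Walk x y) := by
    intro x y pg hle
    by_cases hxy : x = y
    · subst hxy; exact ⟨Walk.nil⟩
    · by_contra hno
      have hempty : {c | ∃ p : H.Walk x y, walkWeight wH p = c} = ∅ := by
        ext c
        simp only [Set.mem_setOf_eq, Set.mem_empty_iff_false, iff_false]
        rintro ⟨ph, -⟩
        exact hno ⟨ph⟩
      have h0 : wdist H wH x y = 0 := by
        unfold wdist; rw [hempty, Real.sInf_empty]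
      have hpos := wdist_pos hw hxy pg
      have := hdom x y
      linarith
  obtain ⟨Wuxi⟩ := hHwalk u xi q hsub₁
  obtain ⟨Wxjv⟩ := hHwalk xj v (p.dropUntil xj hxj) hsub₂
  -- the 3-edge bridge walk in H
  have bridge : H.Walk xi xj := Walk.cons hia (Walk.cons hab (Walk.cons hjb.symm Walk.nil))
  have hbridge : wdist H wH xi xj ≤ wH xi a + wH a b + wH xj b := by
    have := wdist_le_walkWeight hwHnn
      (Walk.cons hia (Walk.cons hab (Walk.cons hjb.symm Walk.nil)))
    rw [walkWeight_cons, walkWeight_cons, walkWeight_cons, walkWeight_nil] at this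
    rw [hwHsymm b xj] at this
    linarith
  -- H-side triangles
  have t1 : wdist H wH u v ≤ wdist H wH u xi + wdist H wH xi v :=
    wdist_triangle hwHnn ⟨Wuxi⟩ ⟨bridge.append Wxjv⟩
  have t2 : wdist H wH xi v ≤ wdist H wH xi xj + wdist H wH xj v :=
    wdist_triangle hwHnn ⟨bridge⟩ ⟨Wxjv⟩
  -- combine
  have hGab_nn := wdist_nonneg hwnn a b
  linarith [hwab ▸ hab_bound]
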